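/- Lower bound for the Riccati-type value function: let 𝒪 ⊂ ℝⁿ nonempty compact, φ = ½dist(·,𝒪)², p the positive root of p²+λp−𝔠=0. For any admissible control α with trajectory y and any a.e.-defined q(t) ∈ ∂^C φ(y(t)) with d/dt φ(y(t)) = ⟨q(t),α(t)⟩ and ½|q(t)|² ≤ φ(y(t)), one has p(λφ(y(t)) − d/dt φ(y(t))) ≤ ½|α(t)|² + 𝔠 φ(y(t)) for a.e. t, and consequently p·φ(x) ≤ ∫₀^∞ (½|α(t)|² + 𝔠 φ(y(t))) e^{−λt} dt. -/

import Mathlib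

open MeasureTheory Set Metric Filter

/-- Clarke generalized directional derivative. -/
noncomputable def clarkeDirDeriv {n : ℕ} (φ : EuclideanSpace ℝ (Fin n) → ℝ)
    (x v : EuclideanSpace ℝ (Fin n)) : ℝ :=
  limsup (fun p : EuclideanSpace ℝ (Fin n) × ℝ => (φ (p.1 + p.2 • v) - φ p.1) / p.2)
    ((nhds x) ×ˢ (nhdsWithin 0 (Set.Ioi 0)))

/-- Clarke subdifferential. -/
def clarkeSubdiff {n : ℕ} (φ : EuclideanSpace ℝ (Fin n) → ℝ)
    (x : EuclideanSpace ℝ (Fin n)) : Set (EuclideanSpace ℝ (Fin n)) :=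
  {ζ | ∀ v, (inner ℝ ζ v : ℝ) ≤ clarkeDirDeriv φ x v}

/-!
Completing the square, `0 ≤ ½‖α + p q‖² = ½‖α‖² + p⟪q, α⟫ + (p²/2)‖q‖²`, together with
`½‖q‖² ≤ φ(y)` and `p² + λp = 𝔠` gives the pointwise bound. After multiplication by `e^{-λt}`
its left side is `-p (φ(y(t)) e^{-λt})'`, and `φ ∘ y` is Lipschitz on bounded intervals, hence
absolutely continuous, so the fundamental theorem of calculus integrates the bound to
`p (φ(x) - φ(y(T)) e^{-λT}) ≤ ∫₀^T (½|α|² + 𝔠 φ(y)) e^{-λt}`. Since `|y(t) - x| ≤ M t`, `φ(y(t))`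
grows at most quadratically, so the boundary term vanishes as `T → ∞`.
-/

open Real Topology
open scoped NNReal

theorem quadratic_root_pos {c l : ℝ} (hc : 0 < c) : 0 < (-l + √(l ^ 2 + 4 * c)) / 2 := by
  have : |l| < √(l ^ 2 + 4 * c) := by
    rw [← sqrt_sq_eq_abs]
    exact sqrt_lt_sqrt (sq_nonneg l) (by linarith)
  linarith [le_abs_self l]

theorem quadratic_root_sq_add_mul {c l : ℝ} (h : 0 ≤ l ^ 2 + 4 * c) :
    ((-l + √(l ^ 2 + 4 * c)) / 2) ^ 2 + l * ((-l + √(l ^ 2 + 4 * c)) / 2) = c := by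
  linear_combination (1 / 4 : ℝ) * sq_sqrt h

theorem mul_sub_inner_le {E : Type*} [NormedAddCommGroup E] [InnerProductSpace ℝ E]
    {p l c f : ℝ} {q a : E} (hp : 0 ≤ p) (hpc : p ^ 2 + l * p = c) (hq : (1 / 2) * ‖q‖ ^ 2 ≤ f) :
    p * (l * f - inner ℝ q a) ≤ (1 / 2) * ‖a‖ ^ 2 + c * f := by
  have hsq := norm_add_sq_real a (p • q)
  rw [norm_smul, real_inner_smul_right, real_inner_comm, norm_of_nonneg hp] at hsq
  nlinarith [sq_nonneg ‖a + p • q‖, mul_le_mul_of_nonneg_left hq (sq_nonneg p)]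

theorem tendsto_one_add_sq_mul_exp_neg_mul {l : ℝ} (hl : 0 < l) :
    Tendsto (fun t => (1 + t) ^ 2 * exp (-l * t)) atTop (𝓝 0) := by
  have h (k : ℕ) : Tendsto (fun t : ℝ => t ^ k * exp (-l * t)) atTop (𝓝 0) := by
    simpa using tendsto_rpow_mul_exp_neg_mul_atTop_nhds_zero k l hl
  have hsum := ((h 0).add ((h 1).const_mul 2)).add (h 2)
  rw [mul_zero, add_zero, add_zero] at hsum
  exact hsum.congr fun t => by ring

theorem integrableOn_one_add_sq_mul_exp_neg_mul {l : ℝ} (hl : 0 < l) :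
    IntegrableOn (fun t => (1 + t) ^ 2 * exp (-l * t)) (Ioi 0) := by
  refine integrable_of_isBigO_exp_neg (half_pos hl) (by fun_prop) ?_
  have hsplit : (fun t => (1 + t) ^ 2 * exp (-l * t))
      = fun t => (1 + t) ^ 2 * exp (-(l / 2) * t) * exp (-(l / 2) * t) := by
    ext t
    rw [mul_assoc, ← exp_add]
    ring_nf
  rw [hsplit]
  simpa using ((tendsto_one_add_sq_mul_exp_neg_mul (half_pos hl)).isBigO_one ℝ).mul
    (Asymptotics.isBigO_refl (fun t => exp (-(l / 2) * t)) atTop)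

theorem AbsolutelyContinuousOnInterval.integral_sub_deriv_mul_exp_neg {f f' : ℝ → ℝ} {a b : ℝ}
    (l : ℝ) (hf : AbsolutelyContinuousOnInterval f a b)
    (hf' : ∀ᵐ t, t ∈ uIoc a b → HasDerivAt f (f' t) t) :
    IntervalIntegrable (fun t => (l * f t - f' t) * exp (-l * t)) volume a b ∧
    ∫ t in a..b, (l * f t - f' t) * exp (-l * t) = f a * exp (-l * a) - f b * exp (-l * b) := by
  have hfe := hf.mul (ContDiffOn.absolutelyContinuousOnInterval (f := fun t => exp (-l * t))
    (by fun_prop))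
  have hderiv : ∀ᵐ t, t ∈ uIoc a b →
      -deriv (f * fun t => exp (-l * t)) t = (l * f t - f' t) * exp (-l * t) := by
    filter_upwards [hf'] with t ht hmem
    have hexp : HasDerivAt (fun t => exp (-l * t)) (exp (-l * t) * (-l)) t := by
      simpa using ((hasDerivAt_id t).const_mul (-l)).exp
    rw [((ht hmem).mul hexp).deriv]
    ring
  refine ⟨hfe.intervalIntegrable_deriv.neg.congr_ae
    ((ae_restrict_iff' measurableSet_uIoc).2 hderiv), ?_⟩
  rw [← intervalIntegral.integral_congr_ae hderiv, intervalIntegral.integral_neg,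
    hfe.integral_deriv_eq_sub]
  simp only [Pi.mul_apply]
  ring

theorem integrableOn_mul_exp_neg_of_abs_le {g : ℝ → ℝ} {K l : ℝ} (hl : 0 < l)
    (hg : AEStronglyMeasurable g (volume.restrict (Ioi 0)))
    (hK : ∀ t, 0 ≤ t → |g t| ≤ K * (1 + t) ^ 2) :
    IntegrableOn (fun t => g t * exp (-l * t)) (Ioi 0) := by
  refine ((integrableOn_one_add_sq_mul_exp_neg_mul hl).const_mul K).mono'
    (hg.mul (by fun_prop)) ?_
  filter_upwards [ae_restrict_mem measurableSet_Ioi] with t ht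
  rw [norm_mul, norm_of_nonneg (exp_pos _).le, ← mul_assoc]
  exact mul_le_mul_of_nonneg_right (hK t (le_of_lt ht)) (exp_pos _).le

theorem tendsto_mul_exp_neg_of_abs_le {f : ℝ → ℝ} {K l : ℝ} (hl : 0 < l)
    (hK : ∀ t, 0 ≤ t → |f t| ≤ K * (1 + t) ^ 2) :
    Tendsto (fun t => f t * exp (-l * t)) atTop (𝓝 0) := by
  have hlim := (tendsto_one_add_sq_mul_exp_neg_mul hl).const_mul K
  rw [mul_zero] at hlim
  refine squeeze_zero_norm' ?_ hlim
  filter_upwards [eventually_ge_atTop 0] with t ht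
  rw [norm_mul, norm_of_nonneg (exp_pos _).le, ← mul_assoc]
  exact mul_le_mul_of_nonneg_right (hK t ht) (exp_pos _).le

theorem le_integral_mul_exp_neg_of_sub_deriv_le {f f' g : ℝ → ℝ} {l : ℝ}
    (hf : ∀ T, 0 ≤ T → AbsolutelyContinuousOnInterval f 0 T)
    (hf' : ∀ᵐ t, 0 ≤ t → HasDerivAt f (f' t) t ∧ l * f t - f' t ≤ g t)
    (hg : IntegrableOn (fun t => g t * exp (-l * t)) (Ioi 0))
    (hlim : Tendsto (fun T => f T * exp (-l * T)) atTop (𝓝 0)) :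
    f 0 ≤ ∫ t in Ioi 0, g t * exp (-l * t) := by
  have hfinite : ∀ T, 0 ≤ T → f 0 - f T * exp (-l * T) ≤ ∫ t in 0..T, g t * exp (-l * t) := by
    intro T hT
    obtain ⟨hint, hftc⟩ := (hf T hT).integral_sub_deriv_mul_exp_neg l
      (hf'.mono fun t ht hmem => (ht (uIoc_of_le hT ▸ hmem).1.le).1)
    have hgT : IntervalIntegrable (fun t => g t * exp (-l * t)) volume 0 T :=
      (intervalIntegrable_iff_integrableOn_Ioc_of_le hT).2 (hg.mono_set Ioc_subset_Ioi_self)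
    calc f 0 - f T * exp (-l * T) = ∫ t in 0..T, (l * f t - f' t) * exp (-l * t) := by
          rw [hftc, mul_zero, exp_zero, mul_one]
      _ ≤ ∫ t in 0..T, g t * exp (-l * t) := by
          refine intervalIntegral.integral_mono_ae_restrict hT hint hgT ?_
          filter_upwards [ae_restrict_mem measurableSet_Icc, ae_restrict_of_ae hf'] with t ht h
          exact mul_le_mul_of_nonneg_right (h ht.1).2 (exp_pos _).le
  have hleft : Tendsto (fun T => f 0 - f T * exp (-l * T)) atTop (𝓝 (f 0)) := by
    simpa using hlim.const_sub (f 0)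
  exact le_of_tendsto_of_tendsto hleft (intervalIntegral_tendsto_integral_Ioi 0 hg tendsto_id)
    ((eventually_ge_atTop 0).mono hfinite)

theorem LipschitzWith.lipschitzOnWith_half_sq {X : Type*} [PseudoMetricSpace X] {f : X → ℝ}
    {K : ℝ≥0} (hf : LipschitzWith K f) (R : ℝ≥0) :
    LipschitzOnWith (R * K) (fun x => (1 / 2) * f x ^ 2) {x | |f x| ≤ R} := by
  refine lipschitzOnWith_iff_dist_le_mul.2 fun x hx z hz => ?_
  have hfac : (1 / 2) * f x ^ 2 - (1 / 2) * f z ^ 2 = (1 / 2) * (f x + f z) * (f x - f z) := by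
    ring
  have hsum : |(1 / 2) * (f x + f z)| ≤ R := by
    rw [abs_mul, abs_of_pos one_half_pos]
    linarith [abs_add_le (f x) (f z), hx.out, hz.out]
  rw [Real.dist_eq, hfac, abs_mul, NNReal.coe_mul, mul_assoc, ← Real.dist_eq]
  exact mul_le_mul hsum (hf.dist_le_mul x z) dist_nonneg R.coe_nonneg

section Trajectory

variable {E : Type*} [NormedAddCommGroup E] [NormedSpace ℝ E] {y α : ℝ → E} {M : ℝ}

theorem lipschitzOnWith_Ici_of_hasDerivAt (hy : ∀ t, 0 ≤ t → HasDerivAt y (α t) t)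
    (hα : ∀ t, ‖α t‖ ≤ M) : LipschitzOnWith M.toNNReal y (Ici 0) :=
  (convex_Ici 0).lipschitzOnWith_of_nnnorm_hasDerivWithin_le
    (fun t ht => (hy t ht).hasDerivWithinAt) fun t _ => by
      rw [← NNReal.coe_le_coe, coe_nnnorm, Real.coe_toNNReal']
      exact (hα t).trans (le_max_left M 0)

theorem infDist_le_infDist_add_mul (O : Set E) (hy : ∀ t, 0 ≤ t → HasDerivAt y (α t) t)
    (hα : ∀ t, ‖α t‖ ≤ M) {t : ℝ} (ht : 0 ≤ t) :
    infDist (y t) O ≤ infDist (y 0) O + M * t := by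
  have hM : 0 ≤ M := (norm_nonneg _).trans (hα 0)
  have hdist := (lipschitzOnWith_Ici_of_hasDerivAt hy hα).dist_le_mul t ht 0 self_mem_Ici
  rw [Real.coe_toNNReal M hM, dist_zero_right, norm_of_nonneg ht] at hdist
  linarith [infDist_le_infDist_add_dist (s := O) (x := y t) (y := y 0)]

theorem half_sq_infDist_le (O : Set E) (hy : ∀ t, 0 ≤ t → HasDerivAt y (α t) t)
    (hα : ∀ t, ‖α t‖ ≤ M) {t : ℝ} (ht : 0 ≤ t) :
    (1 / 2) * infDist (y t) O ^ 2 ≤ (1 / 2) * (infDist (y 0) O + M) ^ 2 * (1 + t) ^ 2 := by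
  have hM : 0 ≤ M := (norm_nonneg _).trans (hα 0)
  have hlin : infDist (y t) O ≤ (infDist (y 0) O + M) * (1 + t) := by
    nlinarith [infDist_le_infDist_add_mul O hy hα ht, infDist_nonneg (x := y 0) (s := O)]
  rw [mul_assoc, ← mul_pow]
  gcongr
  exact infDist_nonneg

theorem absolutelyContinuousOnInterval_half_sq_infDist (O : Set E)
    (hy : ∀ t, 0 ≤ t → HasDerivAt y (α t) t) (hα : ∀ t, ‖α t‖ ≤ M) {T : ℝ} (hT : 0 ≤ T) :
    AbsolutelyContinuousOnInterval (fun t => (1 / 2) * infDist (y t) O ^ 2) 0 T := by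
  have hmaps : MapsTo y (uIcc 0 T) {z | |infDist z O| ≤ (infDist (y 0) O + M * T).toNNReal} := by
    intro t ht
    rw [uIcc_of_le hT] at ht
    have := infDist_le_infDist_add_mul O hy hα ht.1
    have hM : 0 ≤ M := (norm_nonneg _).trans (hα 0)
    show |infDist (y t) O| ≤ _
    rw [abs_of_nonneg infDist_nonneg]
    calc infDist (y t) O ≤ infDist (y 0) O + M * T := by nlinarith [ht.2]
      _ ≤ _ := Real.le_coe_toNNReal _
  have hlip := ((lipschitz_infDist_pt O).lipschitzOnWith_half_sq _).comp
    ((lipschitzOnWith_Ici_of_hasDerivAt hy hα).mono ?_) hmaps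
  · exact hlip.absolutelyContinuousOnInterval
  · rw [uIcc_of_le hT]
    exact Icc_subset_Ici_self

theorem integrableOn_discounted_running_cost [MeasurableSpace E] [OpensMeasurableSpace E]
    (O : Set E) (hy : ∀ t, 0 ≤ t → HasDerivAt y (α t) t) (hα : ∀ t, ‖α t‖ ≤ M)
    (hα_meas : Measurable α) {c l : ℝ} (hc : 0 ≤ c) (hl : 0 < l) :
    IntegrableOn (fun t => ((1 / 2) * ‖α t‖ ^ 2 + c * ((1 / 2) * infDist (y t) O ^ 2)) *
      exp (-l * t)) (Ioi 0) := by
  have hy_cont : ContinuousOn y (Ioi 0) := fun t ht =>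
    (hy t ht.le).continuousAt.continuousWithinAt
  have hmeas : AEStronglyMeasurable
      (fun t => (1 / 2) * ‖α t‖ ^ 2 + c * ((1 / 2) * infDist (y t) O ^ 2))
      (volume.restrict (Ioi 0)) :=
    ((hα_meas.norm.pow_const 2).const_mul _).aestronglyMeasurable.add
      (((((continuous_infDist_pt O).comp_continuousOn hy_cont).pow 2).const_mul _).const_mul _
        |>.aestronglyMeasurable measurableSet_Ioi)
  refine integrableOn_mul_exp_neg_of_abs_le
    (K := (1 / 2) * M ^ 2 + c * ((1 / 2) * (infDist (y 0) O + M) ^ 2)) hl hmeas fun t ht => ?_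
  have hα_sq : ‖α t‖ ^ 2 ≤ M ^ 2 * (1 + t) ^ 2 :=
    calc ‖α t‖ ^ 2 ≤ M ^ 2 * 1 := by rw [mul_one]; gcongr; exact hα t
      _ ≤ M ^ 2 * (1 + t) ^ 2 := by gcongr; exact one_le_pow₀ (by linarith)
  rw [abs_of_nonneg (by positivity)]
  nlinarith [half_sq_infDist_le O hy hα ht]

end Trajectory

theorem stmt12_general {n : ℕ} (O : Set (EuclideanSpace ℝ (Fin n)))
    (φ : EuclideanSpace ℝ (Fin n) → ℝ)
    (hφ : ∀ z, φ z = (1 / 2) * (infDist z O) ^ 2)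
    (c lam M p : ℝ) (hc : 0 < c) (hlam : 0 < lam)
    (hp : p = (-lam + Real.sqrt (lam ^ 2 + 4 * c)) / 2)
    (x : EuclideanSpace ℝ (Fin n)) (α y : ℝ → EuclideanSpace ℝ (Fin n))
    (hα_meas : Measurable α) (hα_bd : ∀ s, ‖α s‖ ≤ M)
    (hy0 : y 0 = x) (hyd : ∀ t, 0 ≤ t → HasDerivAt y (α t) t)
    (q : ℝ → EuclideanSpace ℝ (Fin n))
    (hq : ∀ᵐ t ∂volume, 0 ≤ t →
      q t ∈ clarkeSubdiff φ (y t) ∧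
      HasDerivAt (fun s => φ (y s)) ((inner ℝ (q t) (α t) : ℝ)) t ∧
      (1 / 2) * ‖q t‖ ^ 2 ≤ φ (y t)) :
    (∀ᵐ t ∂volume, 0 ≤ t →
      p * (lam * φ (y t) - (inner ℝ (q t) (α t) : ℝ))
        ≤ (1 / 2) * ‖α t‖ ^ 2 + c * φ (y t)) ∧
    p * φ x ≤ ∫ t in Ioi (0 : ℝ),
        ((1 / 2) * ‖α t‖ ^ 2 + c * φ (y t)) * Real.exp (-lam * t) := by
  have hp0 : 0 ≤ p := hp ▸ (quadratic_root_pos hc).le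
  have hpc : p ^ 2 + lam * p = c := hp ▸ quadratic_root_sq_add_mul (by positivity)
  obtain rfl : φ = fun z => (1 / 2) * infDist z O ^ 2 := funext hφ
  subst hy0
  beta_reduce at hq ⊢
  have hpointwise : ∀ᵐ t, 0 ≤ t →
      p * (lam * ((1 / 2) * infDist (y t) O ^ 2) - inner ℝ (q t) (α t))
        ≤ (1 / 2) * ‖α t‖ ^ 2 + c * ((1 / 2) * infDist (y t) O ^ 2) := by
    filter_upwards [hq] with t hqt ht
    exact mul_sub_inner_le hp0 hpc (hqt ht).2.2
  refine ⟨hpointwise, le_integral_mul_exp_neg_of_sub_deriv_le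
    (f' := fun t => p * inner ℝ (q t) (α t))
    (fun T hT => (absolutelyContinuousOnInterval_half_sq_infDist O hyd hα_bd hT).const_mul p) ?_
    (integrableOn_discounted_running_cost O hyd hα_bd hα_meas hc.le hlam)
    (tendsto_mul_exp_neg_of_abs_le (K := p * ((1 / 2) * (infDist (y 0) O + M) ^ 2)) hlam
      fun t ht => ?_)⟩
  · filter_upwards [hq, hpointwise] with t hqt hpt ht
    exact ⟨(hqt ht).2.1.const_mul p, by linarith [hpt ht]⟩
  · rw [abs_of_nonneg (by positivity)]
    nlinarith [half_sq_infDist_le O hyd hα_bd ht]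

/-- lower bound for the Riccati-type value function. With
`φ = ½dist(·,𝒪)²` and `p` the positive root of `p²+λp−𝔠=0`, for any admissible
control `α` (measurable, `‖α‖ ≤ M`) with trajectory `y` starting at `x`, and any
a.e.-defined selection `q(t) ∈ ∂^C φ(y(t))` with `d/dt φ(y(t)) = ⟨q(t),α(t)⟩` and
`½|q(t)|² ≤ φ(y(t))` a.e., the pointwise bound
`p(λφ(y(t)) − d/dt φ(y(t))) ≤ ½|α(t)|² + 𝔠 φ(y(t))` holds a.e. on `[0,∞)`, and
consequently `p·φ(x) ≤ ∫₀^∞ (½|α(t)|² + 𝔠 φ(y(t))) e^{−λt} dt`. -/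
theorem stmt12 {n : ℕ} (O : Set (EuclideanSpace ℝ (Fin n)))
    (hO : O.Nonempty) (hOc : IsCompact O)
    (φ : EuclideanSpace ℝ (Fin n) → ℝ)
    (hφ : ∀ z, φ z = (1 / 2) * (infDist z O) ^ 2)
    (c lam M p : ℝ) (hc : 0 < c) (hlam : 0 < lam) (hM : 0 < M)
    (hp : p = (-lam + Real.sqrt (lam ^ 2 + 4 * c)) / 2)
    (x : EuclideanSpace ℝ (Fin n)) (α y : ℝ → EuclideanSpace ℝ (Fin n))
    (hα_meas : Measurable α) (hα_bd : ∀ s, ‖α s‖ ≤ M)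
    (hy0 : y 0 = x) (hyd : ∀ t, 0 ≤ t → HasDerivAt y (α t) t)
    (q : ℝ → EuclideanSpace ℝ (Fin n))
    (hq : ∀ᵐ t ∂volume, 0 ≤ t →
      q t ∈ clarkeSubdiff φ (y t) ∧
      HasDerivAt (fun s => φ (y s)) ((inner ℝ (q t) (α t) : ℝ)) t ∧
      (1 / 2) * ‖q t‖ ^ 2 ≤ φ (y t)) :
    (∀ᵐ t ∂volume, 0 ≤ t →
      p * (lam * φ (y t) - (inner ℝ (q t) (α t) : ℝ))
        ≤ (1 / 2) * ‖α t‖ ^ 2 + c * φ (y t)) ∧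
    p * φ x ≤ ∫ t in Ioi (0 : ℝ),
        ((1 / 2) * ‖α t‖ ^ 2 + c * φ (y t)) * Real.exp (-lam * t) :=
  stmt12_general O φ hφ c lam M p hc hlam hp x α y hα_meas hα_bd hy0 hyd q hq
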